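/- Soundness of the interpretation of intuitionistic multiplicative linear logic: let (𝒜, ≼, →) be an implicative structure and let A ↦ A^𝒜 be any interpretation of IMLL formulas. If the sequent ⊢ A (with empty context) is derivable in the IMLL sequent calculus, then A^𝒜 belongs to the linear core lcore(𝒜), the smallest linear separator of 𝒜. -/
import Mathlib


/-! STATEMENT 10: soundness of the interpretation of intuitionistic multiplicative
linear logic (IMLL): if `⊢ A` is derivable then `A^𝒜 ∈ lcore(𝒜)`. -/

/-- A linear separator for an implication `arr` on a complete lattice. -/
def LinSep {α : Type*} [CompleteLattice α] (arr : α → α → α) (S : Set α) : Prop :=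
  (∀ a b : α, a ∈ S → a ≤ b → b ∈ S) ∧
  ((⨅ a : α, arr a a) ∈ S) ∧
  ((⨅ a : α, ⨅ b : α, ⨅ c : α, arr (arr b c) (arr (arr a b) (arr a c))) ∈ S) ∧
  ((⨅ a : α, ⨅ b : α, ⨅ c : α, arr (arr a (arr b c)) (arr b (arr a c))) ∈ S) ∧
  (∀ a b : α, a ∈ S → arr a b ∈ S → b ∈ S)

/-- The linear core: the smallest linear separator. -/
def lcore {α : Type*} [CompleteLattice α] (arr : α → α → α) : Set α :=
  ⋂₀ {S : Set α | LinSep arr S}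

/-- The tensor product `a ⊗ b := ⨅_c ((a → b → c) → c)`. -/
def tens {α : Type*} [CompleteLattice α] (arr : α → α → α) (a b : α) : α :=
  ⨅ c : α, arr (arr a (arr b c)) c

/-- Formulas of intuitionistic multiplicative linear logic over atoms in `V`. -/
inductive Fm (V : Type*) : Type _
  | atom : V → Fm V
  | limp : Fm V → Fm V → Fm V
  | tens : Fm V → Fm V → Fm V

/-- The sequent calculus of IMLL, on sequents `Γ ⊢ A` with `Γ` a finite multiset. -/
inductive Deriv {V : Type*} : Multiset (Fm V) → Fm V → Prop
  | ax (A : Fm V) : Deriv {A} A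
  | cut {Γ Δ : Multiset (Fm V)} {A C : Fm V} :
      Deriv Γ A → Deriv (A ::ₘ Δ) C → Deriv (Γ + Δ) C
  | tensR {Γ Δ : Multiset (Fm V)} {A B : Fm V} :
      Deriv Γ A → Deriv Δ B → Deriv (Γ + Δ) (Fm.tens A B)
  | tensL {Γ : Multiset (Fm V)} {A B C : Fm V} :
      Deriv (A ::ₘ B ::ₘ Γ) C → Deriv (Fm.tens A B ::ₘ Γ) C
  | limpR {Γ : Multiset (Fm V)} {A B : Fm V} :
      Deriv (A ::ₘ Γ) B → Deriv Γ (Fm.limp A B)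
  | limpL {Γ Δ : Multiset (Fm V)} {A B C : Fm V} :
      Deriv Γ A → Deriv (B ::ₘ Δ) C → Deriv (Fm.limp A B ::ₘ (Γ + Δ)) C

/-- Interpretation of IMLL formulas in an implicative structure, given values for atoms. -/
def interp {α : Type*} [CompleteLattice α] (arr : α → α → α) {V : Type*} (ρ : V → α) :
    Fm V → α
  | .atom X => ρ X
  | .limp A B => arr (interp arr ρ A) (interp arr ρ B)
  | .tens A B => tens arr (interp arr ρ A) (interp arr ρ B)


section Aux

variable {α : Type*} [CompleteLattice α] {arr : α → α → α} {S : Set α}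

/-- Iterated implication `[a₁,...,aₙ] ⇒ c`. -/
def itimp (arr : α → α → α) (L : List α) (c : α) : α := L.foldr arr c

lemma itimp_cons (x : α) (L : List α) (c : α) :
    itimp arr (x :: L) c = arr x (itimp arr L c) := rfl

lemma itimp_append (L1 L2 : List α) (c : α) :
    itimp arr (L1 ++ L2) c = itimp arr L1 (itimp arr L2 c) :=
  List.foldr_append ..

namespace LinSep

variable (hS : LinSep arr S)
include hS

lemma up {a b : α} (ha : a ∈ S) (h : a ≤ b) : b ∈ S := hS.1 a b ha h

lemma mp {a b : α} (ha : a ∈ S) (h : arr a b ∈ S) : b ∈ S := hS.2.2.2.2 a b ha h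

lemma Iinst (a : α) : arr a a ∈ S := hS.up hS.2.1 (iInf_le _ a)

lemma Binst (a b c : α) : arr (arr b c) (arr (arr a b) (arr a c)) ∈ S :=
  hS.up hS.2.2.1 ((iInf_le _ a).trans ((iInf_le _ b).trans (iInf_le _ c)))

lemma Cinst (a b c : α) : arr (arr a (arr b c)) (arr b (arr a c)) ∈ S :=
  hS.up hS.2.2.2.1 ((iInf_le _ a).trans ((iInf_le _ b).trans (iInf_le _ c)))

lemma rtrans {a b c : α} (h1 : arr a b ∈ S) (h2 : arr b c ∈ S) : arr a c ∈ S :=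
  hS.mp h1 (hS.mp h2 (hS.Binst a b c))

lemma monoR {a b c : α} (h : arr b c ∈ S) : arr (arr a b) (arr a c) ∈ S :=
  hS.mp h (hS.Binst a b c)

lemma swap {a b c : α} (h : arr a (arr b c) ∈ S) : arr b (arr a c) ∈ S :=
  hS.mp h (hS.Cinst a b c)

lemma dni {a : α} (h : a ∈ S) (t : α) : arr (arr a t) t ∈ S :=
  hS.mp h (hS.swap (hS.Iinst (arr a t)))

lemma lemB (L : List α) (a t : α) :
    arr (arr a t) (arr (itimp arr L a) (itimp arr L t)) ∈ S := by
  induction L with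
  | nil => exact hS.Iinst _
  | cons x L ih => exact hS.rtrans ih (hS.Binst x (itimp arr L a) (itimp arr L t))

lemma push {L : List α} {a : α} (h : itimp arr L a ∈ S) (t : α) :
    arr (arr a t) (itimp arr L t) ∈ S :=
  hS.mp h (hS.swap (hS.lemB L a t))

lemma permR {L L' : List α} (h : L.Perm L') (c : α) :
    arr (itimp arr L c) (itimp arr L' c) ∈ S := by
  induction h with
  | nil => exact hS.Iinst _
  | cons x _ ih => exact hS.monoR ih
  | swap x y l => exact hS.Cinst y x (itimp arr l c)
  | trans _ _ ih1 ih2 => exact hS.rtrans ih1 ih2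

lemma perm_mem {L L' : List α} (h : L.Perm L') {c : α} (hm : itimp arr L c ∈ S) :
    itimp arr L' c ∈ S :=
  hS.mp hm (hS.permR h c)

end LinSep

/-- Application in an implicative structure. -/
def appA (arr : α → α → α) (a b : α) : α := sInf {c | a ≤ arr b c}

lemma appA_le {a b c : α} (h : a ≤ arr b c) : appA arr a b ≤ c := sInf_le h

section WithArr

variable (harr_mono : ∀ a a' b b' : α, a' ≤ a → b ≤ b' → arr a b ≤ arr a' b')
  (harr_inf : ∀ (a : α) (B : Set α), arr a (sInf B) = ⨅ b ∈ B, arr a b)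

include harr_inf in
lemma le_arr_appA (a b : α) : a ≤ arr b (appA arr a b) := by
  rw [appA, harr_inf]
  exact le_iInf₂ fun c hc => hc

include harr_inf in
lemma LinSep.appA_mem (hS : LinSep arr S) {a b : α} (ha : a ∈ S) (hb : b ∈ S) :
    appA arr a b ∈ S :=
  hS.mp hb (hS.up ha (le_arr_appA harr_inf a b))

include harr_inf in
lemma arr_iInf (a : α) {ι : Sort*} (f : ι → α) :
    arr a (⨅ i, f i) = ⨅ i, arr a (f i) := by
  rw [← sInf_range, harr_inf, iInf_range]

include harr_mono harr_inf in
/-- The "pairing" element is below `a → b → (a ⊗ b)`. -/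
lemma pair_le (a b : α) :
    appA arr (appA arr (⨅ a : α, ⨅ b : α, ⨅ c : α, arr (arr b c) (arr (arr a b) (arr a c)))
        (⨅ a : α, ⨅ b : α, ⨅ c : α, arr (arr a (arr b c)) (arr b (arr a c))))
      (appA arr (⨅ a : α, ⨅ b : α, ⨅ c : α, arr (arr a (arr b c)) (arr b (arr a c)))
        (⨅ a : α, arr a a))
      ≤ arr a (arr b (tens arr a b)) := by
  set I' : α := ⨅ a : α, arr a a with hI
  set C' : α := ⨅ a : α, ⨅ b : α, ⨅ c : α, arr (arr a (arr b c)) (arr b (arr a c)) with hC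
  set B' : α := ⨅ a : α, ⨅ b : α, ⨅ c : α, arr (arr b c) (arr (arr a b) (arr a c)) with hB
  have Bi : ∀ x y z : α, B' ≤ arr (arr y z) (arr (arr x y) (arr x z)) := fun x y z =>
    (iInf_le _ x).trans ((iInf_le _ y).trans (iInf_le _ z))
  have Ci : ∀ x y z : α, C' ≤ arr (arr x (arr y z)) (arr y (arr x z)) := fun x y z =>
    (iInf_le _ x).trans ((iInf_le _ y).trans (iInf_le _ z))
  have Ii : ∀ x : α, I' ≤ arr x x := fun x => iInf_le _ x
  rw [tens, arr_iInf harr_inf, arr_iInf harr_inf]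
  refine le_iInf fun c => ?_
  set w : α := arr b c with hw
  set f : α := arr a w with hf
  set Y : α := arr f w with hY
  have claim1 : appA arr C' I' ≤ arr a Y := by
    apply appA_le
    refine le_trans (Ci f a w) ?_
    exact harr_mono _ _ _ _ (Ii f) le_rfl
  have claim2 : appA arr B' C' ≤ arr (arr a Y) (arr a (arr b (arr f c))) := by
    apply appA_le
    refine le_trans (Bi a Y (arr b (arr f c))) ?_
    exact harr_mono _ _ _ _ (Ci f b c) le_rfl
  apply appA_le
  exact claim2.trans (harr_mono _ _ _ _ claim1 le_rfl)

include harr_mono harr_inf in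
lemma LinSep.pairS (hS : LinSep arr S) (a b : α) :
    arr a (arr b (tens arr a b)) ∈ S := by
  refine hS.up ?_ (pair_le harr_mono harr_inf a b)
  exact hS.appA_mem harr_inf (hS.appA_mem harr_inf hS.2.2.1 hS.2.2.2.1)
    (hS.appA_mem harr_inf hS.2.2.2.1 hS.2.1)

include harr_mono in
lemma LinSep.tens_elim (hS : LinSep arr S) {a b t : α}
    (h : arr a (arr b t) ∈ S) : arr (tens arr a b) t ∈ S := by
  refine hS.up (hS.dni h t) (harr_mono _ _ _ _ ?_ le_rfl)
  exact iInf_le _ t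

include harr_mono harr_inf in
/-- Main soundness lemma. -/
lemma LinSep.sound {V : Type*} (ρ : V → α) (hS : LinSep arr S)
    {Γ : Multiset (Fm V)} {A : Fm V} (h : Deriv Γ A) :
    ∀ L : List (Fm V), (↑L : Multiset (Fm V)) = Γ →
      itimp arr (L.map (interp arr ρ)) (interp arr ρ A) ∈ S := by
  induction h with
  | ax A =>
    intro L hL
    rw [Multiset.coe_eq_singleton] at hL
    subst hL
    exact hS.Iinst _
  | @cut Γ Δ A C h1 h2 ih1 ih2 =>
    intro L hL
    obtain ⟨lΓ, hΓ⟩ := Quotient.exists_rep Γ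
    obtain ⟨lΔ, hΔ⟩ := Quotient.exists_rep Δ
    have hΓ : (↑lΓ : Multiset (Fm V)) = Γ := hΓ
    have hΔ : (↑lΔ : Multiset (Fm V)) = Δ := hΔ
    have hg := ih1 lΓ hΓ
    have hd := ih2 (A :: lΔ) (by rw [← Multiset.cons_coe, hΔ])
    rw [List.map_cons, itimp_cons] at hd
    have key : itimp arr ((lΓ ++ lΔ).map (interp arr ρ)) (interp arr ρ C) ∈ S := by
      rw [List.map_append, itimp_append]
      exact hS.mp hd (hS.push hg _)
    refine hS.perm_mem (List.Perm.map _ ?_) key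
    rw [← Multiset.coe_eq_coe, ← Multiset.coe_add, hΓ, hΔ, hL]
  | @tensR Γ Δ A B h1 h2 ih1 ih2 =>
    intro L hL
    obtain ⟨lΓ, hΓ⟩ := Quotient.exists_rep Γ
    obtain ⟨lΔ, hΔ⟩ := Quotient.exists_rep Δ
    have hΓ : (↑lΓ : Multiset (Fm V)) = Γ := hΓ
    have hΔ : (↑lΔ : Multiset (Fm V)) = Δ := hΔ
    have hg := ih1 lΓ hΓ
    have hd := ih2 lΔ hΔ
    set a := interp arr ρ A
    set b := interp arr ρ B
    have hpair : arr a (arr b (tens arr a b)) ∈ S := hS.pairS harr_mono harr_inf a b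
    have h1' : itimp arr (lΓ.map (interp arr ρ)) (arr b (tens arr a b)) ∈ S :=
      hS.mp hpair (hS.push hg _)
    have h2' : arr (arr b (tens arr a b)) (itimp arr (lΔ.map (interp arr ρ)) (tens arr a b)) ∈ S :=
      hS.push hd _
    have key : itimp arr ((lΓ ++ lΔ).map (interp arr ρ)) (interp arr ρ (Fm.tens A B)) ∈ S := by
      rw [List.map_append, itimp_append]
      exact hS.mp h1' (hS.mp h2' (hS.lemB _ _ _))
    refine hS.perm_mem (List.Perm.map _ ?_) key
    rw [← Multiset.coe_eq_coe, ← Multiset.coe_add, hΓ, hΔ, hL]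
  | @tensL Γ A B C h1 ih1 =>
    intro L hL
    obtain ⟨lΓ, hΓ⟩ := Quotient.exists_rep Γ
    have hΓ : (↑lΓ : Multiset (Fm V)) = Γ := hΓ
    have hd := ih1 (A :: B :: lΓ) (by rw [← Multiset.cons_coe, ← Multiset.cons_coe, hΓ])
    rw [List.map_cons, List.map_cons, itimp_cons, itimp_cons] at hd
    have key : itimp arr ((Fm.tens A B :: lΓ).map (interp arr ρ)) (interp arr ρ C) ∈ S := by
      rw [List.map_cons, itimp_cons]
      exact hS.tens_elim harr_mono hd
    refine hS.perm_mem (List.Perm.map _ ?_) key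
    rw [← Multiset.coe_eq_coe, ← Multiset.cons_coe, hΓ, hL]
  | @limpR Γ A B h1 ih1 =>
    intro L hL
    have hd := ih1 (A :: L) (by rw [← Multiset.cons_coe, hL])
    rw [List.map_cons, itimp_cons] at hd
    have : itimp arr ((L.map (interp arr ρ)) ++ [interp arr ρ A]) (interp arr ρ B) ∈ S := by
      rw [← itimp_cons (arr := arr) (interp arr ρ A) (List.map (interp arr ρ) L) (interp arr ρ B)] at hd
      exact hS.perm_mem (List.perm_append_singleton _ _).symm hd
    rwa [itimp_append] at this
  | @limpL Γ Δ A B C h1 h2 ih1 ih2 =>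
    intro L hL
    obtain ⟨lΓ, hΓ⟩ := Quotient.exists_rep Γ
    obtain ⟨lΔ, hΔ⟩ := Quotient.exists_rep Δ
    have hΓ : (↑lΓ : Multiset (Fm V)) = Γ := hΓ
    have hΔ : (↑lΔ : Multiset (Fm V)) = Δ := hΔ
    have hg := ih1 lΓ hΓ
    have hd := ih2 (B :: lΔ) (by rw [← Multiset.cons_coe, hΔ])
    rw [List.map_cons, itimp_cons] at hd
    have key : itimp arr ((Fm.limp A B :: (lΓ ++ lΔ)).map (interp arr ρ)) (interp arr ρ C) ∈ S := by
      rw [List.map_cons, itimp_cons, List.map_append, itimp_append]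
      exact hS.rtrans (hS.monoR hd) (hS.push hg _)
    refine hS.perm_mem (List.Perm.map _ ?_) key
    rw [← Multiset.coe_eq_coe, ← Multiset.cons_coe, ← Multiset.coe_add, hΓ, hΔ, hL]

end WithArr
end Aux

theorem lcore_linSep {α : Type*} [CompleteLattice α] (arr : α → α → α) :
    LinSep arr (lcore arr) := by
  constructor
  · intro a b ha hab
    exact fun T hT => hT.1 a b (ha T hT) hab
  refine ⟨fun T hT => hT.2.1, fun T hT => hT.2.2.1, fun T hT => hT.2.2.2.1, ?_⟩
  intro a b ha hab
  exact fun T hT => hT.2.2.2.2 a b (ha T hT) (hab T hT)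

theorem stmt_10 {α : Type*} [CompleteLattice α] (arr : α → α → α)
    (harr_mono : ∀ a a' b b' : α, a' ≤ a → b ≤ b' → arr a b ≤ arr a' b')
    (harr_inf : ∀ (a : α) (B : Set α), arr a (sInf B) = ⨅ b ∈ B, arr a b)
    {V : Type*} (ρ : V → α) (A : Fm V) (hA : Deriv (0 : Multiset (Fm V)) A) :
    interp arr ρ A ∈ lcore arr := by
  have hS := lcore_linSep arr
  exact hS.sound harr_mono harr_inf ρ hA [] rfl
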